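/- arXiv:1805.10120 — 3 statements merged into one kernel-verified Lean document; each statement's English description precedes it below -/
import Mathlib

section
/- Let (β_k) and (α_k) be sequences of nonnegative reals with Σ_{k} α_k = ∞ and Σ_k α_k β_k < ∞. If moreover there is M > 0 such that |β_{k+1} - β_k| ≤ M α_k for all k, then lim_{k→∞} β_k = 0. -/
/-!
If `β_m ≥ ε`, then `β` must later drop below `ε/2`, because on a stretch where `β ≥ ε/2` the
divergence of `∑ α` would contradict the summability of `∑ α β`. Along the way down, the
step bound forces `M ∑ α ≥ ε/2` on that stretch, so `M ∑_{k ≥ m} α_k β_k ≥ ε²/4`; since tails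
of a convergent series tend to zero, `β_m < ε` eventually.
The case of arbitrary signs reduces to `|β|`, as real summability is absolute.
-/

open Filter Topology

theorem Nat.exists_le_and_forall_Ico_not {P : ℕ → Prop} {m : ℕ} (h : ∃ p, m ≤ p ∧ P p) :
    ∃ p, m ≤ p ∧ P p ∧ ∀ j ∈ Finset.Ico m p, ¬ P j := by
  classical
  obtain ⟨hmp, hp⟩ := Nat.find_spec h
  refine ⟨Nat.find h, hmp, hp, fun j hj hPj => ?_⟩
  rw [Finset.mem_Ico] at hj
  exact Nat.find_min h hj.2 ⟨hj.1, hPj⟩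

theorem sum_Ico_le_tsum_nat_add {f : ℕ → ℝ} (hf : ∀ k, 0 ≤ f k) (hsum : Summable f) (m p : ℕ) :
    ∑ j ∈ Finset.Ico m p, f j ≤ ∑' k, f (k + m) := by
  rw [Finset.sum_Ico_eq_sum_range]
  simp_rw [add_comm m]
  exact ((summable_nat_add_iff m).2 hsum).sum_le_tsum _ fun k _ => hf _

section StepBound

variable {α β : ℕ → ℝ} {M : ℝ}

theorem sub_le_mul_sum_Ico_of_abs_sub_le (hstep : ∀ k, |β (k + 1) - β k| ≤ M * α k)
    {m p : ℕ} (hmp : m ≤ p) : β m - β p ≤ M * ∑ j ∈ Finset.Ico m p, α j := by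
  induction p, hmp using Nat.le_induction with
  | base => simp
  | succ p hmp ih =>
    rw [Finset.sum_Ico_succ_top hmp, mul_add]
    linarith [neg_abs_le (β (p + 1) - β p), hstep p]

theorem nonneg_of_abs_sub_le_mul_of_not_summable (hαnn : ∀ k, 0 ≤ α k) (hαdiv : ¬ Summable α)
    (hstep : ∀ k, |β (k + 1) - β k| ≤ M * α k) : 0 ≤ M := by
  by_contra! hM
  refine hαdiv (summable_zero.congr fun k => le_antisymm (hαnn k) ?_)
  exact nonpos_of_mul_nonneg_right ((abs_nonneg _).trans (hstep k)) hM

theorem mul_le_mul_sum_Ico_of_drop (hαnn : ∀ k, 0 ≤ α k) (hM : 0 ≤ M)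
    (hstep : ∀ k, |β (k + 1) - β k| ≤ M * α k) {m p : ℕ} (hmp : m ≤ p) {c d : ℝ}
    (hc : 0 ≤ c) (hdrop : d ≤ β m - β p) (hbelow : ∀ j ∈ Finset.Ico m p, c ≤ β j) :
    c * d ≤ M * ∑ j ∈ Finset.Ico m p, α j * β j := by
  set A := ∑ j ∈ Finset.Ico m p, α j
  have hA : 0 ≤ A := Finset.sum_nonneg fun j _ => hαnn j
  have hdA : d ≤ M * A := hdrop.trans (sub_le_mul_sum_Ico_of_abs_sub_le hstep hmp)
  have hcA : c * A ≤ ∑ j ∈ Finset.Ico m p, α j * β j := by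
    rw [Finset.mul_sum]
    exact Finset.sum_le_sum fun j hj => by nlinarith [hαnn j, hbelow j hj]
  calc c * d ≤ c * (M * A) := mul_le_mul_of_nonneg_left hdA hc
    _ = M * (c * A) := by ring
    _ ≤ _ := mul_le_mul_of_nonneg_left hcA hM

theorem frequently_lt_of_not_summable (hαnn : ∀ k, 0 ≤ α k) (hαdiv : ¬ Summable α)
    (hsum : Summable fun k => α k * β k) {c : ℝ} (hc : 0 < c) : ∃ᶠ k in atTop, β k < c := by
  refine fun hge => hαdiv <| (hsum.mul_left c⁻¹).of_norm_bounded_eventually_nat ?_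
  filter_upwards [hge] with k hk
  rw [not_lt] at hk
  rw [Real.norm_of_nonneg (hαnn k), le_inv_mul_iff₀ hc]
  exact (mul_comm c (α k)).trans_le (mul_le_mul_of_nonneg_left hk (hαnn k))

theorem tendsto_zero_of_summable_mul_of_nonneg (hαnn : ∀ k, 0 ≤ α k) (hβnn : ∀ k, 0 ≤ β k)
    (hαdiv : ¬ Summable α) (hsum : Summable fun k => α k * β k)
    (hstep : ∀ k, |β (k + 1) - β k| ≤ M * α k) :
    Tendsto β atTop (𝓝 0) := by
  have hαβnn : ∀ k, 0 ≤ α k * β k := fun k => mul_nonneg (hαnn k) (hβnn k)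
  have hM := nonneg_of_abs_sub_le_mul_of_not_summable hαnn hαdiv hstep
  refine tendsto_order.2 ⟨fun a ha => .of_forall fun k => ha.trans_le (hβnn k), fun ε hε => ?_⟩
  have htail : Tendsto (fun m => M * ∑' k, α (k + m) * β (k + m)) atTop (𝓝 0) := by
    simpa using (tendsto_sum_nat_add fun k => α k * β k).const_mul M
  filter_upwards [htail.eventually (gt_mem_nhds (by positivity : 0 < ε / 2 * (ε / 2)))]
    with m hm
  by_contra! hεm
  obtain ⟨p, hmp, hp, hbelow⟩ := Nat.exists_le_and_forall_Ico_not
    (frequently_atTop.1 (frequently_lt_of_not_summable hαnn hαdiv hsum (half_pos hε)) m)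
  have hcost : ε / 2 * (ε / 2) ≤ M * ∑ j ∈ Finset.Ico m p, α j * β j :=
    mul_le_mul_sum_Ico_of_drop hαnn hM hstep hmp (half_pos hε).le (by linarith)
      fun j hj => not_lt.1 (hbelow j hj)
  exact hm.not_ge <| hcost.trans <|
    mul_le_mul_of_nonneg_left (sum_Ico_le_tsum_nat_add hαβnn hsum m p) hM

end StepBound

theorem tendsto_zero_of_summable_mul_general (α β : ℕ → ℝ) (M : ℝ)
    (hαnn : ∀ k, 0 ≤ α k)
    (hαdiv : ¬ Summable α)
    (hsum : Summable fun k => α k * β k)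
    (hstep : ∀ k, |β (k + 1) - β k| ≤ M * α k) :
    Tendsto β atTop (𝓝 0) := by
  rw [tendsto_zero_iff_abs_tendsto_zero]
  refine tendsto_zero_of_summable_mul_of_nonneg hαnn (fun k => abs_nonneg _) hαdiv ?_
    fun k => (abs_abs_sub_abs_le_abs_sub _ _).trans (hstep k)
  simpa only [Function.comp_apply, abs_mul, abs_of_nonneg (hαnn _)] using hsum.abs

/-- Alber–Iusem–Solodov lemma: if `Σ α_k = ∞`, `Σ α_k β_k < ∞` and
`|β_{k+1} - β_k| ≤ M α_k`, then `β_k → 0`. -/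
theorem tendsto_zero_of_summable_mul (α β : ℕ → ℝ) (M : ℝ) (hM : 0 < M)
    (hαnn : ∀ k, 0 ≤ α k) (hβnn : ∀ k, 0 ≤ β k)
    (hαdiv : ¬ Summable α)
    (hsum : Summable fun k => α k * β k)
    (hstep : ∀ k, |β (k + 1) - β k| ≤ M * α k) :
    Tendsto β atTop (𝓝 0) :=
  tendsto_zero_of_summable_mul_general α β M hαnn hαdiv hsum hstep
end

section
/- Let σ² ∈ [0, 1/2), L > 0, α = σ²/L, and define t_0 = 0 and recursively β_k = (α(1-σ²) + √(α²(1-σ²)² + 4α(1-σ²) t_{k-1}))/2, t_k = t_{k-1} + β_k for k ≥ 1. Then t_k ≥ k² σ⁴ (1-σ²) / (4L) for all k ≥ 1. -/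
/-! With `c = α (1 - s)` the recursion reads `t_{k+1} = t_k + (c + √(c² + 4 c t_k)) / 2`.
If `t_k ≥ c k² / 4` then `√(c² + 4 c t_k) ≥ c k`, so `t_{k+1} ≥ c (k² + 2k + 2) / 4 ≥ c (k + 1)² / 4`.
Finally `s² ≤ s` turns `c / 4 = s (1 - s) / (4 L)` into the claimed constant. -/

lemma le_add_half_add_sqrt {c x n : ℝ} (hc : 0 ≤ c) (hx : c * n ^ 2 / 4 ≤ x) :
    c * (n + 1) ^ 2 / 4 ≤ x + (c + √(c ^ 2 + 4 * c * x)) / 2 := by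
  have hsqrt : c * n ≤ √(c ^ 2 + 4 * c * x) := by
    apply Real.le_sqrt_of_sq_le
    nlinarith [mul_le_mul_of_nonneg_left hx hc]
  nlinarith

lemma mul_sq_div_four_le_of_rec {c : ℝ} (hc : 0 ≤ c) {t : ℕ → ℝ} (ht0 : 0 ≤ t 0)
    (ht : ∀ k, t (k + 1) = t k + (c + √(c ^ 2 + 4 * c * t k)) / 2) (k : ℕ) :
    c * k ^ 2 / 4 ≤ t k := by
  induction k with
  | zero => simpa using ht0
  | succ k ih =>
    rw [ht k]
    push_cast
    exact le_add_half_add_sqrt hc ih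

/-- Growth estimate for the accelerated method's coefficients:
`t_k ≥ k² σ⁴ (1 - σ²) / (4L)`, where `s` denotes `σ²`. -/
theorem accel_coeff_growth (s L : ℝ) (hs0 : 0 ≤ s) (hs : s < 1 / 2) (hL : 0 < L)
    (α : ℝ) (hα : α = s / L) (t β : ℕ → ℝ) (ht0 : t 0 = 0)
    (hβ : ∀ k : ℕ, β (k + 1) =
      (α * (1 - s) + Real.sqrt (α ^ 2 * (1 - s) ^ 2 + 4 * α * (1 - s) * t k)) / 2)
    (ht : ∀ k : ℕ, t (k + 1) = t k + β (k + 1)) :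
    ∀ k : ℕ, 1 ≤ k → (k : ℝ) ^ 2 * s ^ 2 * (1 - s) / (4 * L) ≤ t k := by
  intro k _
  have hc : 0 ≤ α * (1 - s) := by rw [hα]; exact mul_nonneg (by positivity) (by linarith)
  have hrec : ∀ k, t (k + 1) =
      t k + (α * (1 - s) + √((α * (1 - s)) ^ 2 + 4 * (α * (1 - s)) * t k)) / 2 := by
    intro k
    rw [ht, hβ]
    ring_nf
  have hgrowth := mul_sq_div_four_le_of_rec hc ht0.ge hrec k
  have hconst : s ^ 2 * (1 - s) / L ≤ α * (1 - s) := by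
    rw [hα, div_mul_eq_mul_div]
    gcongr
    · linarith
    · nlinarith
  calc (k : ℝ) ^ 2 * s ^ 2 * (1 - s) / (4 * L) = (k : ℝ) ^ 2 / 4 * (s ^ 2 * (1 - s) / L) := by
        ring
    _ ≤ (k : ℝ) ^ 2 / 4 * (α * (1 - s)) := by gcongr
    _ = α * (1 - s) * k ^ 2 / 4 := by ring
    _ ≤ t k := hgrowth
end

section
/- Let g be proper closed convex on ℝⁿ, f convex differentiable, σ ∈ [0,1), α > 0, x̃ ∈ ℝⁿ, and suppose w̄ ∈ ∂_{ε̄} g(x̄), ∇f(x̃) ∈ ∂_ε f(x̄) with ‖α(w̄ + ∇f(x̃)) + x̄ - x̃‖² + 2α(ε̄ + ε) ≤ σ²(‖x̄ - x̃‖² + ‖α(w̄ + ∇f(x̃))‖²). Define the affine function ℓ(x) := (f+g)(x̄) + ⟨w̄ + ∇f(x̃), x - x̄⟩ - ε̄ - ε. Then for all x ∈ ℝⁿ: ℓ(x) + (1/(2α(1-σ²)))‖x - x̃‖² ≥ (f+g)(x̄) + ((1-2σ²)/(2α))‖x̄ - x̃‖². -/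
/-!
Put `v = w̄ + ∇f(x̃)` and `β = α(1 - σ²)`. The left-hand side is a quadratic in `x` minimized at
`x = x̃ - β v`, so it is at least `(f+g)(x̄) + ⟨v, x̃ - x̄⟩ - ε̄ - ε - (β/2)‖v‖²`. Expanding the
square in the error criterion bounds `⟨v, x̄ - x̃⟩ + ε̄ + ε` by
`-(1 - σ²)(‖x̄ - x̃‖² / (2α) + (α/2)‖v‖²)`, and the `‖v‖²` terms cancel.
-/

open RealInnerProductSpace

section

variable {E : Type*} [NormedAddCommGroup E] [InnerProductSpace ℝ E]

lemma norm_smul_add_sq (a : ℝ) (v y : E) :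
    ‖a • v + y‖ ^ 2 = a ^ 2 * ‖v‖ ^ 2 + 2 * a * ⟪v, y⟫ + ‖y‖ ^ 2 := by
  rw [norm_add_sq_real, real_inner_smul_left, norm_smul, mul_pow, Real.norm_eq_abs, sq_abs]
  ring

lemma neg_half_mul_norm_sq_le_inner_add {β : ℝ} (hβ : 0 < β) (v y : E) :
    -(β / 2 * ‖v‖ ^ 2) ≤ ⟪v, y⟫ + 1 / (2 * β) * ‖y‖ ^ 2 := by
  have hsq : ⟪v, y⟫ + 1 / (2 * β) * ‖y‖ ^ 2 + β / 2 * ‖v‖ ^ 2 = ‖β • v + y‖ ^ 2 / (2 * β) := by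
    rw [norm_smul_add_sq]
    field_simp
    ring
  have : 0 ≤ ‖β • v + y‖ ^ 2 / (2 * β) := by positivity
  linarith

lemma inner_add_le_of_norm_smul_add_sq_le {α σ e : ℝ} (hα : 0 < α) {v y : E}
    (h : ‖α • v + y‖ ^ 2 + 2 * α * e ≤ σ ^ 2 * (‖y‖ ^ 2 + ‖α • v‖ ^ 2)) :
    ⟪v, y⟫ + e ≤ -((1 - σ ^ 2) / (2 * α) * ‖y‖ ^ 2 + α * (1 - σ ^ 2) / 2 * ‖v‖ ^ 2) := by
  rw [norm_smul_add_sq, norm_smul, mul_pow, Real.norm_eq_abs, sq_abs] at h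
  have hrhs : -((1 - σ ^ 2) / (2 * α) * ‖y‖ ^ 2 + α * (1 - σ ^ 2) / 2 * ‖v‖ ^ 2) =
      -(1 - σ ^ 2) * (‖y‖ ^ 2 + α ^ 2 * ‖v‖ ^ 2) / (2 * α) := by
    field_simp
  rw [hrhs, le_div_iff₀ (by positivity)]
  linarith

end

theorem accel_linear_approx_ineq_general (n : ℕ)
    (f g : EuclideanSpace ℝ (Fin n) → ℝ)
    (σ α : ℝ) (hσ0 : 0 ≤ σ) (hσ1 : σ < 1) (hα : 0 < α)
    (εb ε : ℝ)
    (xt xb wb : EuclideanSpace ℝ (Fin n))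
    (herr : ‖α • (wb + gradient f xt) + xb - xt‖ ^ 2 + 2 * α * (εb + ε) ≤
      σ ^ 2 * (‖xb - xt‖ ^ 2 + ‖α • (wb + gradient f xt)‖ ^ 2)) :
    ∀ x, (f xb + g xb) + (1 - 2 * σ ^ 2) / (2 * α) * ‖xb - xt‖ ^ 2 ≤
      ((f xb + g xb) + ⟪wb + gradient f xt, x - xb⟫ - εb - ε) +
        (1 / (2 * α * (1 - σ ^ 2))) * ‖x - xt‖ ^ 2 := by
  intro x
  set v := wb + gradient f xt
  have hσsq : σ ^ 2 < 1 := by nlinarith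
  have hmin := neg_half_mul_norm_sq_le_inner_add (mul_pos hα (sub_pos.2 hσsq)) v (x - xt)
  rw [← mul_assoc] at hmin
  have hcrit := inner_add_le_of_norm_smul_add_sq_le hα (y := xb - xt) (by rwa [← add_sub_assoc])
  have hsplit : ⟪v, x - xb⟫ = ⟪v, x - xt⟫ - ⟪v, xb - xt⟫ := by
    rw [← inner_sub_right, sub_sub_sub_cancel_right]
  have hcoef : (1 - 2 * σ ^ 2) / (2 * α) * ‖xb - xt‖ ^ 2 ≤ (1 - σ ^ 2) / (2 * α) * ‖xb - xt‖ ^ 2 := by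
    gcongr
    nlinarith
  linarith

/-- Key inequality for the accelerated method (Lemma 8 of the paper):
the linear approximation `ℓ` plus the quadratic regularization dominates
`(f+g)(x̄) + ((1-2σ²)/(2α))‖x̄ - x̃‖²`. -/
theorem accel_linear_approx_ineq (n : ℕ)
    (f g : EuclideanSpace ℝ (Fin n) → ℝ)
    (hg : ConvexOn ℝ Set.univ g) (hgc : LowerSemicontinuous g)
    (hf : ConvexOn ℝ Set.univ f) (hdiff : Differentiable ℝ f)
    (σ α : ℝ) (hσ0 : 0 ≤ σ) (hσ1 : σ < 1) (hα : 0 < α)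
    (εb ε : ℝ) (hεb : 0 ≤ εb) (hε : 0 ≤ ε)
    (xt xb wb : EuclideanSpace ℝ (Fin n))
    (hwb : ∀ y, g xb + ⟪wb, y - xb⟫ - εb ≤ g y)
    (hgrad : ∀ y, f xb + ⟪gradient f xt, y - xb⟫ - ε ≤ f y)
    (herr : ‖α • (wb + gradient f xt) + xb - xt‖ ^ 2 + 2 * α * (εb + ε) ≤
      σ ^ 2 * (‖xb - xt‖ ^ 2 + ‖α • (wb + gradient f xt)‖ ^ 2)) :
    ∀ x, (f xb + g xb) + (1 - 2 * σ ^ 2) / (2 * α) * ‖xb - xt‖ ^ 2 ≤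
      ((f xb + g xb) + ⟪wb + gradient f xt, x - xb⟫ - εb - ε) +
        (1 / (2 * α * (1 - σ ^ 2))) * ‖x - xt‖ ^ 2 :=
  accel_linear_approx_ineq_general n f g σ α hσ0 hσ1 hα εb ε xt xb wb herr
end
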